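/- arXiv:1312.2980 — 2 statements merged into one kernel-verified Lean document; each statement's English description precedes it below -/
import Mathlib

section
/- Let μ be a probability measure on infinite simple paths in Z^3 starting at y with Σ_{z∈Z^3} μ[{π : z ∈ π}]^2 < ∞. Let φ be a map sending each such path π to an infinite simple path φ(π) in Z^d starting at a fixed point y', with the property that for every x ∈ Z^d there is a set T(x) ⊆ Z^3 with |T(x)| ≤ 7 such that whenever x ∈ φ(π) there exists z ∈ T(x) with z ∈ π, and such that each z ∈ Z^3 lies in T(x) for at most 7·2^d points x ∈ Z^d. Then the pushforward μ∘φ^{-1} satisfies Σ_{x∈Z^d} (μ∘φ^{-1})[{π' : x ∈ π'}]^2 ≤ 2^d·7^2 · Σ_{z∈Z^3} μ[{π : z ∈ π}]^2 < ∞. -/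
/-! Every visit of `φ π` to `x` is witnessed by a visit of `π` to some `z ∈ T x`, so a union
bound and Cauchy–Schwarz give `μ[x ∈ φ π]² ≤ 7 · ∑_{z ∈ T x} μ[z ∈ π]²`. Summing over `x`, each
`z ∈ ℤ³` is counted at most `7·2^d` times. -/

open Classical MeasureTheory ENNReal

noncomputable section

/-- Vertices of `ℤ^d`. -/
abbrev Vd (d : ℕ) := Fin d → ℤ

/-- Infinite simple nearest-neighbor paths in `ℤ^d` starting at `y`. -/
def PathFrom (d : ℕ) (y : Vd d) : Type :=
  {π : ℕ → Vd d // π 0 = y ∧ (∀ n, (∑ i, |π (n + 1) i - π n i|) = 1) ∧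
    Function.Injective π}

instance (d : ℕ) (y : Vd d) : MeasurableSpace (PathFrom d y) := ⊤

section

open Finset

theorem ENNReal.sq_sum_le_card_mul_sum_sq {ι : Type*} (s : Finset ι) (f : ι → ℝ≥0∞) :
    (∑ i ∈ s, f i) ^ 2 ≤ #s * ∑ i ∈ s, f i ^ 2 := by
  by_cases hf : ∀ i ∈ s, f i ≠ ∞
  · have hcoe : ∀ i ∈ s, f i = (f i).toNNReal := fun i hi => (coe_toNNReal (hf i hi)).symm
    rw [sum_congr rfl hcoe, sum_congr rfl fun i hi => congrArg (· ^ 2) (hcoe i hi)]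
    exact_mod_cast _root_.sq_sum_le_card_mul_sum_sq (s := s) (f := fun i => (f i).toNNReal)
  · push Not at hf
    obtain ⟨i, hi, hfi⟩ := hf
    have hsq : ∑ j ∈ s, f j ^ 2 = ∞ := by
      refine top_unique (le_trans ?_ (single_le_sum (fun _ _ => zero_le) hi))
      simp [hfi]
    simp [hsq, (nonempty_of_ne_empty (ne_empty_of_mem hi)).card_ne_zero]

theorem ENNReal.tsum_sum_le_mul_tsum {α β : Type*} (T : α → Finset β) (f : β → ℝ≥0∞) {N : ℕ}
    (hT : ∀ z, {x | z ∈ T x}.encard ≤ N) :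
    ∑' x, ∑ z ∈ T x, f z ≤ N * ∑' z, f z := by
  calc ∑' x, ∑ z ∈ T x, f z
      = ∑' x, ∑' z, {x | z ∈ T x}.indicator (fun _ => f z) x := by
        refine tsum_congr fun x => ?_
        rw [sum_eq_tsum_indicator]
        simp only [Set.indicator_apply, mem_coe, Set.mem_ofPred_eq]
    _ = ∑' z, ∑' x, {x | z ∈ T x}.indicator (fun _ => f z) x := ENNReal.tsum_comm
    _ = ∑' z, {x | z ∈ T x}.encard * f z := by
        simp_rw [← _root_.tsum_subtype, tsum_set_const]
    _ ≤ ∑' z, N * f z := by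
        gcongr with z
        exact_mod_cast hT z
    _ = N * ∑' z, f z := ENNReal.tsum_mul_left

theorem MeasureTheory.tsum_measure_sq_le_of_cover {Ω α β : Type*} [MeasurableSpace Ω]
    (μ : Measure Ω) (A : β → Set Ω) (B : α → Set Ω) (T : α → Finset β) {K N : ℕ}
    (hcover : ∀ x, B x ⊆ ⋃ z ∈ T x, A z) (hcard : ∀ x, #(T x) ≤ K)
    (hdual : ∀ z, {x | z ∈ T x}.encard ≤ N) :
    ∑' x, μ (B x) ^ 2 ≤ K * N * ∑' z, μ (A z) ^ 2 := by
  have hpoint : ∀ x, μ (B x) ^ 2 ≤ K * ∑ z ∈ T x, μ (A z) ^ 2 := fun x =>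
    calc μ (B x) ^ 2 ≤ (∑ z ∈ T x, μ (A z)) ^ 2 := by
          gcongr
          exact (measure_mono (hcover x)).trans (measure_biUnion_finset_le _ _)
      _ ≤ #(T x) * ∑ z ∈ T x, μ (A z) ^ 2 := ENNReal.sq_sum_le_card_mul_sum_sq _ _
      _ ≤ K * ∑ z ∈ T x, μ (A z) ^ 2 := by gcongr; exact_mod_cast hcard x
  calc ∑' x, μ (B x) ^ 2 ≤ ∑' x, K * ∑ z ∈ T x, μ (A z) ^ 2 := ENNReal.tsum_le_tsum hpoint
    _ = K * ∑' x, ∑ z ∈ T x, μ (A z) ^ 2 := ENNReal.tsum_mul_left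
    _ ≤ K * (N * ∑' z, μ (A z) ^ 2) := by gcongr; exact ENNReal.tsum_sum_le_mul_tsum T _ hdual
    _ = K * N * ∑' z, μ (A z) ^ 2 := (mul_assoc _ _ _).symm

end

theorem pushforward_finite_energy_general (d : ℕ)
    (y : Vd 3) (y' : Vd d)
    (μ : Measure (PathFrom 3 y))
    (hμ : (∑' z : Vd 3, (μ {π : PathFrom 3 y | ∃ n, π.1 n = z}) ^ 2) ≠ ⊤)
    (φ : PathFrom 3 y → PathFrom d y')
    (T : Vd d → Finset (Vd 3))
    (hTcard : ∀ x, (T x).card ≤ 7)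
    (hTcover : ∀ (x : Vd d) (π : PathFrom 3 y),
      (∃ n, (φ π).1 n = x) → ∃ z ∈ T x, ∃ n, π.1 n = z)
    (hTdual : ∀ z : Vd 3, {x : Vd d | z ∈ T x}.Finite ∧
      Set.ncard {x : Vd d | z ∈ T x} ≤ 7 * 2 ^ d) :
    (∑' x : Vd d, (μ {π : PathFrom 3 y | ∃ n, (φ π).1 n = x}) ^ 2)
        ≤ (2 ^ d * 7 ^ 2 : ℝ≥0∞) *
          ∑' z : Vd 3, (μ {π : PathFrom 3 y | ∃ n, π.1 n = z}) ^ 2 ∧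
      (∑' x : Vd d, (μ {π : PathFrom 3 y | ∃ n, (φ π).1 n = x}) ^ 2) ≠ ⊤ := by
  have hcover : ∀ x, {π | ∃ n, (φ π).1 n = x} ⊆ ⋃ z ∈ T x, {π : PathFrom 3 y | ∃ n, π.1 n = z} :=
    fun x π hπ => by
      obtain ⟨z, hz, hvisit⟩ := hTcover x π hπ
      exact Set.mem_biUnion hz hvisit
  have hdual : ∀ z, {x | z ∈ T x}.encard ≤ (7 * 2 ^ d : ℕ) := fun z => by
    rw [← (hTdual z).1.cast_ncard_eq]
    exact_mod_cast (hTdual z).2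
  have hbound := tsum_measure_sq_le_of_cover μ _ _ T hcover hTcard hdual
  have hconst : ((7 : ℕ) : ℝ≥0∞) * ((7 * 2 ^ d : ℕ) : ℝ≥0∞) = 2 ^ d * 7 ^ 2 := by
    push_cast; ring
  rw [hconst] at hbound
  have hconst_ne_top : (2 ^ d * 7 ^ 2 : ℝ≥0∞) ≠ ⊤ :=
    mul_ne_top (pow_ne_top ofNat_ne_top) (pow_ne_top ofNat_ne_top)
  exact ⟨hbound, ne_top_of_le_ne_top (mul_ne_top hconst_ne_top hμ) hbound⟩

/-- Claim 3.5 of the paper: if `μ` is a finite-energy probability measure on infinite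
simple paths in `ℤ³` starting at `y`, and `φ` maps such paths to infinite simple paths
in `ℤ^d` starting at `y'` in such a way that `φ(π)` visits `x` only if `π` visits one of
at most `7` sites `T(x) ⊆ ℤ³`, each `z ∈ ℤ³` serving for at most `7·2^d` points `x`,
then the pushforward `μ ∘ φ⁻¹` satisfies
`Σ_x (μ∘φ⁻¹)[x ∈ π']² ≤ 2^d·7² · Σ_z μ[z ∈ π]² < ∞`. -/
theorem pushforward_finite_energy (d : ℕ) (hd : 3 ≤ d)
    (y : Vd 3) (y' : Vd d)
    (μ : Measure (PathFrom 3 y)) [IsProbabilityMeasure μ]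
    (hμ : (∑' z : Vd 3, (μ {π : PathFrom 3 y | ∃ n, π.1 n = z}) ^ 2) ≠ ⊤)
    (φ : PathFrom 3 y → PathFrom d y')
    (T : Vd d → Finset (Vd 3))
    (hTcard : ∀ x, (T x).card ≤ 7)
    (hTcover : ∀ (x : Vd d) (π : PathFrom 3 y),
      (∃ n, (φ π).1 n = x) → ∃ z ∈ T x, ∃ n, π.1 n = z)
    (hTdual : ∀ z : Vd 3, {x : Vd d | z ∈ T x}.Finite ∧
      Set.ncard {x : Vd d | z ∈ T x} ≤ 7 * 2 ^ d) :
    (∑' x : Vd d, (μ {π : PathFrom 3 y | ∃ n, (φ π).1 n = x}) ^ 2)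
        ≤ (2 ^ d * 7 ^ 2 : ℝ≥0∞) *
          ∑' z : Vd 3, (μ {π : PathFrom 3 y | ∃ n, π.1 n = z}) ^ 2 ∧
      (∑' x : Vd d, (μ {π : PathFrom 3 y | ∃ n, (φ π).1 n = x}) ^ 2) ≠ ⊤ :=
  pushforward_finite_energy_general d y y' μ hμ φ T hTcard hTcover hTdual

end
end

section
/- Let 'bad' be a labeling of Z^3 such that for some constants C₅,C₆ > 0 and all z ∈ Z^3, P[z lies on a simple *-path of bad vertices of length ≥ m] ≤ C₅·e^{−m^{C₆}} for all m ≥ 1. For x bad let B_x be the *-connected bad cluster of x, and set S(x) = ∂*_int(Z^3 \ B_x) if x is bad, S(x) = {x} if x is good. Then sup_{x∈Z^3} Σ_{z ≠ x} P[S(x) ∩ S(z) ≠ ∅] < ∞, because S(0) ∩ S(z) ≠ ∅ forces either 0 or z to lie on a simple *-path of bad vertices of length at least ⌊|z|_∞ − 1⌋/2, whence P[S(0)∩S(z) ≠ ∅] ≤ 2C₅·e^{−(⌊|z|_∞−1⌋/2)^{C₆}}. -/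
open Classical MeasureTheory ENNReal

noncomputable section

/-- Vertices of `ℤ³`. -/
abbrev V3 : Type := Fin 3 → ℤ

/-- `x` and `y` are `*`-neighbors (ℓ∞-distance 1). -/
def StarAdj (x y : V3) : Prop := x ≠ y ∧ ∀ i, |x i - y i| ≤ 1

/-- `x` lies on a simple `*`-path of `bad` vertices with at least `m` vertices. -/
def OnBadStarPath (bad : V3 → Prop) (x : V3) (m : ℕ) : Prop :=
  ∃ (n : ℕ) (p : ℕ → V3), m ≤ n + 1 ∧
    (∀ i j, i ≤ n → j ≤ n → p i = p j → i = j) ∧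
    (∀ i < n, StarAdj (p i) (p (i + 1))) ∧
    (∀ i ≤ n, bad (p i)) ∧ ∃ i ≤ n, p i = x

/-- The `*`-connected bad cluster of `x` (empty if `x` is good). -/
def badCluster (bad : V3 → Prop) (x : V3) : Set V3 :=
  {y | ∃ (n : ℕ) (p : ℕ → V3), p 0 = x ∧ p n = y ∧
    (∀ i < n, StarAdj (p i) (p (i + 1))) ∧ ∀ i ≤ n, bad (p i)}

/-- `S(x)`: the interior `*`-boundary of `ℤ³ \ B_x` if `x` is bad, and `{x}` if `x`
is good. -/
def Sset (bad : V3 → Prop) (x : V3) : Set V3 :=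
  if bad x then
    {y | y ∉ badCluster bad x ∧ ∃ z ∈ badCluster bad x, StarAdj y z}
  else {x}

/-- The ℓ∞-norm of `z ∈ ℤ³`. -/
def linf (z : V3) : ℤ := max |z 0| (max |z 1| |z 2|)

/-!
If `y ∈ S(x) ∩ S(z)`, then `y` is `*`-adjacent to a bad vertex `x₀ ∈ B_x` (or `y = x` with `x`
good) and likewise to some `x₁ ∈ B_z`. Shortening bad `*`-walks from `x` to `x₀` and from `z` to
`x₁` to simple paths, the ℓ∞-triangle inequality bounds `|z - x|_∞` by the sum of their lengths
plus `2`, so one of them has at least `⌈|z - x|_∞ / 2⌉` vertices. A union bound gives the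
stretched-exponential estimate, and its sum over `ℤ³` is finite because the bound at `w` is at
most the product over the three coordinates of a summable profile evaluated at `|wᵢ|`.
-/

open Filter Asymptotics

lemma linf_eq_norm (w : V3) : (linf w : ℝ) = ‖w‖ := by
  have hnonneg : (0 : ℝ) ≤ linf w := Int.cast_nonneg ((abs_nonneg _).trans (le_max_left _ _))
  refine le_antisymm ?_ ((pi_norm_le_iff_of_nonneg hnonneg).2 fun i => ?_)
  · have h : ∀ i, (|w i| : ℝ) ≤ ‖w‖ := fun i => Int.norm_eq_abs (w i) ▸ norm_le_pi_norm w i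
    simp only [linf, Int.cast_max, Int.cast_abs]
    exact max_le (h 0) (max_le (h 1) (h 2))
  · rw [Int.norm_eq_abs]
    fin_cases i <;> simp [linf]

lemma one_le_norm_of_ne_zero {ι : Type*} [Fintype ι] {w : ι → ℤ} (hw : w ≠ 0) : 1 ≤ ‖w‖ := by
  obtain ⟨i, hi⟩ := Function.ne_iff.1 hw
  calc (1 : ℝ) ≤ ‖w i‖ := by rw [Int.norm_eq_abs]; exact_mod_cast Int.one_le_abs hi
    _ ≤ ‖w‖ := norm_le_pi_norm w i

lemma StarAdj.norm_sub_le_one {x y : V3} (h : StarAdj x y) : ‖x - y‖ ≤ 1 :=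
  (pi_norm_le_iff_of_nonneg zero_le_one).2 fun i => by
    rw [Pi.sub_apply, Int.norm_eq_abs]
    exact_mod_cast h.2 i

def starGraph : SimpleGraph V3 where
  Adj := StarAdj
  symm := ⟨fun x y h => ⟨h.1.symm, fun i => abs_sub_comm (x i) (y i) ▸ h.2 i⟩⟩
  loopless := ⟨fun _ h => h.1 rfl⟩

lemma norm_sub_le_length {x y : V3} (w : starGraph.Walk x y) : ‖y - x‖ ≤ w.length := by
  induction w with
  | nil => simp
  | @cons u v _ huv _ ih =>
    calc ‖_ - u‖ ≤ ‖_ - v‖ + ‖v - u‖ := norm_sub_le_norm_sub_add_norm_sub _ _ _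
      _ ≤ _ + 1 := add_le_add ih (norm_sub_rev v u ▸ StarAdj.norm_sub_le_one huv)
      _ = _ := by simp

lemma OnBadStarPath.mono {bad : V3 → Prop} {x : V3} {m m' : ℕ} (h : OnBadStarPath bad x m)
    (hm : m' ≤ m) : OnBadStarPath bad x m' :=
  let ⟨n, p, hmn, hp⟩ := h
  ⟨n, p, hm.trans hmn, hp⟩

lemma onBadStarPath_of_isPath {bad : V3 → Prop} {x y : V3} {w : starGraph.Walk x y}
    (hw : w.IsPath) (hbad : ∀ v ∈ w.support, bad v) : OnBadStarPath bad x (w.length + 1) :=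
  ⟨w.length, w.getVert, le_rfl, fun _ _ hi hj hij => hw.getVert_injOn hi hj hij,
    fun _ hi => w.adj_getVert_succ hi, fun i _ => hbad _ (w.getVert_mem_support i),
    0, Nat.zero_le _, w.getVert_zero⟩

lemma exists_walk_of_mem_badCluster {bad : V3 → Prop} {x y : V3} (hy : y ∈ badCluster bad x) :
    ∃ w : starGraph.Walk x y, ∀ v ∈ w.support, bad v := by
  obtain ⟨n, p, rfl, rfl, hadj, hbad⟩ := hy
  induction n with
  | zero => exact ⟨.nil, by simpa using hbad 0 le_rfl⟩
  | succ n ih =>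
    obtain ⟨w, hw⟩ := ih (fun i hi => hadj i (by omega)) (fun i hi => hbad i (by omega))
    refine ⟨w.concat (show starGraph.Adj _ _ from hadj n n.lt_succ_self), fun v hv => ?_⟩
    simp only [SimpleGraph.Walk.support_concat, List.mem_append, List.mem_singleton] at hv
    rcases hv with hv | rfl
    exacts [hw v hv, hbad _ le_rfl]

lemma exists_onBadStarPath_of_mem_badCluster {bad : V3 → Prop} {x y : V3}
    (hy : y ∈ badCluster bad x) : ∃ n : ℕ, ‖y - x‖ ≤ n ∧ OnBadStarPath bad x (n + 1) := by
  obtain ⟨w, hw⟩ := exists_walk_of_mem_badCluster hy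
  exact ⟨w.bypass.length, norm_sub_le_length _, onBadStarPath_of_isPath w.bypass_isPath
    fun v hv => hw v (w.support_bypass_subset_support hv)⟩

lemma exists_onBadStarPath_of_mem_Sset {bad : V3 → Prop} {x y : V3} (hy : y ∈ Sset bad x) :
    ∃ n : ℕ, ‖y - x‖ ≤ n ∧ (n = 0 ∨ OnBadStarPath bad x n) := by
  unfold Sset at hy
  split_ifs at hy
  · obtain ⟨-, x₀, hx₀, hyx₀⟩ := hy
    obtain ⟨n, hn, hpath⟩ := exists_onBadStarPath_of_mem_badCluster hx₀
    refine ⟨n + 1, ?_, Or.inr hpath⟩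
    calc ‖y - x‖ ≤ ‖y - x₀‖ + ‖x₀ - x‖ := norm_sub_le_norm_sub_add_norm_sub _ _ _
      _ ≤ 1 + n := add_le_add hyx₀.norm_sub_le_one hn
      _ = (n + 1 : ℕ) := by push_cast; ring
  · rw [Set.mem_singleton_iff.1 hy]
    exact ⟨0, by simp, Or.inl rfl⟩

lemma onBadStarPath_of_Sset_inter_nonempty {bad : V3 → Prop} {x z : V3} (hzx : z ≠ x)
    (hne : (Sset bad x ∩ Sset bad z).Nonempty) :
    OnBadStarPath bad x ⌈‖z - x‖ / 2⌉₊ ∨ OnBadStarPath bad z ⌈‖z - x‖ / 2⌉₊ := by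
  obtain ⟨y, hyx, hyz⟩ := hne
  obtain ⟨a, ha, hpa⟩ := exists_onBadStarPath_of_mem_Sset hyx
  obtain ⟨b, hb, hpb⟩ := exists_onBadStarPath_of_mem_Sset hyz
  have hsum : ‖z - x‖ ≤ a + b :=
    calc ‖z - x‖ ≤ ‖z - y‖ + ‖y - x‖ := norm_sub_le_norm_sub_add_norm_sub _ _ _
      _ = ‖y - z‖ + ‖y - x‖ := by rw [norm_sub_rev z y]
      _ ≤ a + b := by linarith
  have hpos : 0 < ⌈‖z - x‖ / 2⌉₊ := Nat.ceil_pos.2 (by simpa [sub_eq_zero] using hzx)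
  have longer {v : V3} {n : ℕ} (hn : ‖z - x‖ ≤ 2 * n) (hv : n = 0 ∨ OnBadStarPath bad v n) :
      OnBadStarPath bad v ⌈‖z - x‖ / 2⌉₊ := by
    have hle : ⌈‖z - x‖ / 2⌉₊ ≤ n := Nat.ceil_le.2 (by linarith)
    rcases hv with rfl | hv
    exacts [absurd hle hpos.not_ge, hv.mono hle]
  rcases le_total b a with hba | hab
  · exact Or.inl (longer (by linarith [(Nat.cast_le.2 hba : (b : ℝ) ≤ a)]) hpa)
  · exact Or.inr (longer (by linarith [(Nat.cast_le.2 hab : (a : ℝ) ≤ b)]) hpb)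

lemma measure_Sset_inter_nonempty_le {Ω : Type*} [MeasurableSpace Ω] (P : Measure Ω)
    (bad : Ω → V3 → Prop) {C₅ C₆ : ℝ} (hC₆ : 0 < C₆)
    (h : ∀ (z : V3) (m : ℕ), 1 ≤ m →
      P {ω | OnBadStarPath (bad ω) z m} ≤ ENNReal.ofReal (C₅ * Real.exp (-(m : ℝ) ^ C₆)))
    {x z : V3} (hzx : z ≠ x) :
    P {ω | (Sset (bad ω) x ∩ Sset (bad ω) z).Nonempty}
      ≤ ENNReal.ofReal (2 * C₅ * Real.exp (-((‖z - x‖ - 1) / 2) ^ C₆)) := by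
  set L := ‖z - x‖
  set m := ⌈L / 2⌉₊
  have hL : 1 ≤ L := one_le_norm_of_ne_zero (sub_ne_zero.2 hzx)
  have hm : 1 ≤ m := Nat.ceil_pos.2 (by linarith)
  have hLm : (L - 1) / 2 ≤ m := (by linarith : (L - 1) / 2 ≤ L / 2).trans (Nat.le_ceil _)
  calc P {ω | (Sset (bad ω) x ∩ Sset (bad ω) z).Nonempty}
      ≤ P {ω | OnBadStarPath (bad ω) x m} + P {ω | OnBadStarPath (bad ω) z m} :=
        (measure_mono fun ω hω => onBadStarPath_of_Sset_inter_nonempty hzx hω).trans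
          (measure_union_le _ _)
    _ ≤ ENNReal.ofReal (C₅ * Real.exp (-(m : ℝ) ^ C₆))
        + ENNReal.ofReal (C₅ * Real.exp (-(m : ℝ) ^ C₆)) := add_le_add (h x m hm) (h z m hm)
    _ = 2 * ENNReal.ofReal C₅ * ENNReal.ofReal (Real.exp (-(m : ℝ) ^ C₆)) := by
        rw [← two_mul, ENNReal.ofReal_mul' (Real.exp_nonneg _), mul_assoc]
    _ ≤ 2 * ENNReal.ofReal C₅ * ENNReal.ofReal (Real.exp (-((L - 1) / 2) ^ C₆)) := by
        gcongr
    _ = ENNReal.ofReal (2 * C₅ * Real.exp (-((L - 1) / 2) ^ C₆)) := by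
        rw [ENNReal.ofReal_mul' (Real.exp_nonneg _), ENNReal.ofReal_mul zero_le_two,
          ENNReal.ofReal_ofNat]

lemma isLittleO_exp_neg_mul_rpow_rpow_atTop {a c : ℝ} (ha : 0 < a) (hc : 0 < c) (b : ℝ) :
    (fun t : ℝ => Real.exp (-a * t ^ c)) =o[atTop] fun t => t ^ b := by
  refine ((isLittleO_exp_neg_mul_rpow_atTop ha (b / c)).comp_tendsto
    (tendsto_rpow_atTop hc)).congr' .rfl ?_
  filter_upwards [eventually_ge_atTop 0] with t ht
  simp only [Function.comp_apply, ← Real.rpow_mul ht, mul_div_cancel₀ b hc.ne']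

lemma summable_exp_neg_mul_rpow_nat {a c : ℝ} (ha : 0 < a) (hc : 0 < c) :
    Summable fun k : ℕ => Real.exp (-a * (k : ℝ) ^ c) :=
  summable_of_isBigO_nat (Real.summable_nat_rpow.2 (by norm_num : (-2 : ℝ) < -1))
    ((isLittleO_exp_neg_mul_rpow_rpow_atTop ha hc (-2)).comp_tendsto
      tendsto_natCast_atTop_atTop).isBigO

/-- Cube root of `exp (-((t - 1) / 2) ^ c)` for `t ≥ 1`; the `max` keeps `rpow` away from
negative bases (junk values) and makes the profile antitone on all of `ℝ`. -/
def decayProfile (c t : ℝ) : ℝ≥0∞ := ENNReal.ofReal (Real.exp (-(max ((t - 1) / 2) 0) ^ c / 3))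

lemma decayProfile_antitone {c : ℝ} (hc : 0 ≤ c) : Antitone (decayProfile c) := by
  intro s t hst
  unfold decayProfile
  gcongr

lemma decayProfile_pow_three {c t : ℝ} (ht : 1 ≤ t) :
    decayProfile c t ^ 3 = ENNReal.ofReal (Real.exp (-((t - 1) / 2) ^ c)) := by
  rw [decayProfile, ← ENNReal.ofReal_pow (Real.exp_nonneg _), ← Real.exp_nat_mul,
    max_eq_left (by linarith)]
  congr 2
  push_cast
  ring

lemma tsum_decayProfile_ne_top {c : ℝ} (hc : 0 < c) : ∑' n : ℤ, decayProfile c ‖n‖ ≠ ⊤ := by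
  set f : ℤ → ℝ := fun n => Real.exp (-(max ((‖n‖ - 1) / 2) 0) ^ c / 3)
  have hnat : Summable fun k : ℕ => f k := by
    rw [← summable_nat_add_iff 1]
    refine (summable_exp_neg_mul_rpow_nat (a := (3 * 2 ^ c)⁻¹) (by positivity) hc).congr
      fun k => ?_
    have hk : (((k + 1 : ℕ) : ℤ) : ℝ) - 1 = k := by push_cast; ring
    simp only [f, Int.norm_eq_abs, abs_of_nonneg (Int.cast_nonneg (Int.natCast_nonneg _)), hk,
      max_eq_left (by positivity : (0 : ℝ) ≤ k / 2), Real.div_rpow (Nat.cast_nonneg k) zero_le_two]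
    ring_nf
  have hint : Summable f := hnat.of_nat_of_neg (by simpa [f] using hnat)
  unfold decayProfile
  rw [← ENNReal.ofReal_tsum_of_nonneg (fun _ => Real.exp_nonneg _) hint]
  exact ENNReal.ofReal_ne_top

lemma tsum_prod_apply_eq_pow {α : Type*} (g : α → ℝ≥0∞) :
    ∀ d : ℕ, ∑' w : Fin d → α, ∏ i, g (w i) = (∑' a, g a) ^ d
  | 0 => by simp
  | d + 1 => by
    rw [← (Fin.consEquiv fun _ => α).tsum_eq, pow_succ', ← tsum_prod_apply_eq_pow g d,
      ← ENNReal.tsum_mul_right]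
    simp only [Fin.consEquiv, Equiv.coe_fn_mk, Fin.prod_univ_succ, Fin.cons_zero, Fin.cons_succ]
    rw [ENNReal.tsum_prod']
    simp only [ENNReal.tsum_mul_left]

lemma pow_card_le_prod_of_antitone {ι : Type*} [Fintype ι] {E : Type*} [SeminormedAddGroup E]
    {ψ : ℝ → ℝ≥0∞} (hψ : Antitone ψ) (w : ι → E) :
    ψ ‖w‖ ^ Fintype.card ι ≤ ∏ i, ψ ‖w i‖ := by
  rw [← Finset.card_univ, ← Finset.prod_const]
  exact Finset.prod_le_prod' fun i _ => hψ (norm_le_pi_norm w i)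

lemma tsum_decayProfile_pow_three_le {c : ℝ} (hc : 0 ≤ c) (x : V3) :
    ∑' z : V3, decayProfile c ‖z - x‖ ^ 3 ≤ (∑' n : ℤ, decayProfile c ‖n‖) ^ 3 := by
  have hshift : ∑' z : V3, decayProfile c ‖z - x‖ ^ 3 = ∑' w : V3, decayProfile c ‖w‖ ^ 3 :=
    (Equiv.subRight x).tsum_eq fun w => decayProfile c ‖w‖ ^ 3
  rw [hshift, ← tsum_prod_apply_eq_pow _ 3]
  exact ENNReal.tsum_le_tsum fun w => by
    simpa using pow_card_le_prod_of_antitone (decayProfile_antitone hc) w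

theorem S_intersection_summable_general {Ω : Type*} [MeasurableSpace Ω]
    (P : Measure Ω) (bad : Ω → V3 → Prop)
    (C₅ C₆ : ℝ) (hC₆ : 0 < C₆)
    (h : ∀ (z : V3) (m : ℕ), 1 ≤ m →
      P {ω | OnBadStarPath (bad ω) z m} ≤ ENNReal.ofReal (C₅ * Real.exp (-(m : ℝ) ^ C₆))) :
    (∀ z : V3, z ≠ 0 →
      P {ω | (Sset (bad ω) 0 ∩ Sset (bad ω) z).Nonempty}
        ≤ ENNReal.ofReal
            (2 * C₅ * Real.exp (-(((linf z : ℝ) - 1) / 2) ^ C₆))) ∧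
    ∃ M : ℝ≥0∞, M ≠ ⊤ ∧ ∀ x : V3,
      (∑' z : V3, if z = x then 0
        else P {ω | (Sset (bad ω) x ∩ Sset (bad ω) z).Nonempty}) ≤ M := by
  have hpoint : ∀ x z : V3, (if z = x then 0
      else P {ω | (Sset (bad ω) x ∩ Sset (bad ω) z).Nonempty})
        ≤ ENNReal.ofReal (2 * C₅) * decayProfile C₆ ‖z - x‖ ^ 3 := by
    intro x z
    split_ifs with hzx
    · exact zero_le
    · rw [decayProfile_pow_three (one_le_norm_of_ne_zero (sub_ne_zero.2 hzx)),
        ← ENNReal.ofReal_mul' (Real.exp_nonneg _)]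
      exact measure_Sset_inter_nonempty_le P bad hC₆ h hzx
  refine ⟨fun z hz => by simpa [linf_eq_norm] using measure_Sset_inter_nonempty_le P bad hC₆ h hz,
    ENNReal.ofReal (2 * C₅) * (∑' n : ℤ, decayProfile C₆ ‖n‖) ^ 3,
    ENNReal.mul_ne_top ENNReal.ofReal_ne_top (ENNReal.pow_ne_top (tsum_decayProfile_ne_top hC₆)),
    fun x => ?_⟩
  calc _ ≤ ∑' z : V3, ENNReal.ofReal (2 * C₅) * decayProfile C₆ ‖z - x‖ ^ 3 :=
        ENNReal.tsum_le_tsum (hpoint x)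
    _ = ENNReal.ofReal (2 * C₅) * ∑' z : V3, decayProfile C₆ ‖z - x‖ ^ 3 := ENNReal.tsum_mul_left
    _ ≤ _ := by gcongr; exact tsum_decayProfile_pow_three_le hC₆.le x

/-- Lemma 5.2 key estimate: under stretched-exponential decay of long bad `*`-paths,
`P[S(0) ∩ S(z) ≠ ∅]` decays stretched-exponentially in `|z|_∞` (because the event
forces `0` or `z` to lie on a bad `*`-path of length at least `⌊|z|_∞ − 1⌋/2`),
and consequently `sup_x Σ_{z ≠ x} P[S(x) ∩ S(z) ≠ ∅] < ∞`. -/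
theorem S_intersection_summable {Ω : Type*} [MeasurableSpace Ω]
    (P : Measure Ω) [IsProbabilityMeasure P] (bad : Ω → V3 → Prop)
    (C₅ C₆ : ℝ) (hC₅ : 0 < C₅) (hC₆ : 0 < C₆)
    (h : ∀ (z : V3) (m : ℕ), 1 ≤ m →
      P {ω | OnBadStarPath (bad ω) z m} ≤ ENNReal.ofReal (C₅ * Real.exp (-(m : ℝ) ^ C₆))) :
    (∀ z : V3, z ≠ 0 →
      P {ω | (Sset (bad ω) 0 ∩ Sset (bad ω) z).Nonempty}
        ≤ ENNReal.ofReal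
            (2 * C₅ * Real.exp (-(((linf z : ℝ) - 1) / 2) ^ C₆))) ∧
    ∃ M : ℝ≥0∞, M ≠ ⊤ ∧ ∀ x : V3,
      (∑' z : V3, if z = x then 0
        else P {ω | (Sset (bad ω) x ∩ Sset (bad ω) z).Nonempty}) ≤ M :=
  S_intersection_summable_general P bad C₅ C₆ hC₆ h
end
end
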